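/- arXiv:0902.1470 — 4 statements merged into one kernel-verified Lean document; each statement's English description precedes it below -/
import Mathlib

section
/- Let n ≥ 2 and let p be any proper divisor of n. Then there exists a semitransitive subsemigroup S of the singular part I_n \ S_n of the symmetric inverse semigroup with |S| = 2n − p + 1. -/
/-- `ISemi n` is the symmetric inverse semigroup `I_n`, realized as the set of all
partial injective maps (partial permutations) of the `n`-element set `Fin n`,
with composition given by `PEquiv.trans` (apply the left factor first, matching
the right-action convention `x φ`). -/
abbrev ISemi (n : ℕ) := PEquiv (Fin n) (Fin n)

/-- `S` is a subsemigroup of `I_n`: a subset closed under composition. -/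
def IsSubsemigroup {n : ℕ} (S : Set (ISemi n)) : Prop :=
  ∀ a ∈ S, ∀ b ∈ S, a.trans b ∈ S

/-- `φ` belongs to the singular part `I_n \ S_n`: its domain is a proper subset
of the underlying set, i.e. it is undefined somewhere. -/
def IsSingular {n : ℕ} (φ : ISemi n) : Prop :=
  ∃ x : Fin n, φ x = none

/-- `S` is semitransitive: for all `x, y` there is `φ ∈ S` with `φ x = y` or `φ y = x`. -/
def Semitransitive {n : ℕ} (S : Set (ISemi n)) : Prop :=
  ∀ x y : Fin n, ∃ φ ∈ S, φ x = some y ∨ φ y = some x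

/-- The semitransitivity preorder induced by `S`: `x ≥ y` iff some `φ ∈ S` maps `x` to `y`. -/
def STGe {n : ℕ} (S : Set (ISemi n)) (x y : Fin n) : Prop :=
  ∃ φ ∈ S, φ x = some y

/-- The transitivity block of `x`: the equivalence class of `x` under `x ≥ y ∧ y ≥ x`. -/
def STBlock {n : ℕ} (S : Set (ISemi n)) (x : Fin n) : Set (Fin n) :=
  {y | STGe S x y ∧ STGe S y x}

/-- `k`-th power of `φ` under composition (`pePow φ 0` is the identity). -/
def pePow {n : ℕ} (φ : ISemi n) : ℕ → ISemi n
  | 0 => PEquiv.refl (Fin n)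
  | k + 1 => (pePow φ k).trans φ

/-
Write `n = p * m` with `1 < m` and view `ZMod m × ZMod p` as `m` blocks of size `p`, indexed by the
first coordinate. The semigroup consists of `⊥`, the `m p` translations `x ↦ v + x` restricted to
block `0`, and the `(m - 1) p` translations with `v.1.val ≤ m - 2` restricted to the blocks
`1 ≤ i < m - v.1.val`, on which they do not wrap around: `1 + m p + (m - 1) p = 2 n - p + 1` maps.
Translating by `v` on `D` and then by `w` on `D'` is translating by `w + v` on `D ∩ (D' - v)`,
which keeps this family closed. Maps of the first kind carry block `0` onto everything, those of
the second kind carry each point of a block `i ≥ 1` onto every point of the blocks `j ≥ i`, and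
each map misses block `0` or block `1`.
-/
section Translate

variable {G : Type*} [AddGroup G]

open Classical in
noncomputable def translateOn (D : Set G) (v : G) : G ≃. G where
  toFun x := if x ∈ D then some (v + x) else none
  invFun y := if -v + y ∈ D then some (-v + y) else none
  inv x y := by
    constructor
    · rintro h
      split_ifs at h with hy
      cases h
      simp [hy]
    · rintro h
      split_ifs at h with hx
      cases h
      simp [hx]

variable {D D' : Set G} {v w x : G}

theorem translateOn_apply_of_mem (hx : x ∈ D) : translateOn D v x = some (v + x) :=
  if_pos hx

theorem translateOn_apply_of_notMem (hx : x ∉ D) : translateOn D v x = none :=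
  if_neg hx

theorem translateOn_trans (D D' : Set G) (v w : G) :
    (translateOn D v).trans (translateOn D' w) =
      translateOn {x | x ∈ D ∧ v + x ∈ D'} (w + v) := by
  ext1 x
  change (translateOn D v x).bind (translateOn D' w) = _
  by_cases hx : x ∈ D
  · by_cases hvx : v + x ∈ D'
    · simp [translateOn_apply_of_mem, hx, hvx, add_assoc]
    · simp [translateOn_apply_of_mem, translateOn_apply_of_notMem, hx, hvx]
  · simp [translateOn_apply_of_notMem, hx]

theorem translateOn_eq_bot (hD : ∀ x, x ∉ D) : translateOn D v = ⊥ := by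
  ext1 x
  exact translateOn_apply_of_notMem (hD x)

end Translate

section Conj

variable {α β : Type*}

def conjPEquiv (e : α ≃ β) (f : α ≃. α) : β ≃. β :=
  (e.symm.toPEquiv.trans f).trans e.toPEquiv

theorem conjPEquiv_apply (e : α ≃ β) (f : α ≃. α) (x : α) :
    conjPEquiv e f (e x) = (f x).map e := by
  change ((some (e.symm (e x))).bind f).bind (fun y => some (e y)) = _
  rw [e.symm_apply_apply, Option.bind_some]
  cases f x <;> rfl

theorem conjPEquiv_trans (e : α ≃ β) (f g : α ≃. α) :
    conjPEquiv e (f.trans g) = (conjPEquiv e f).trans (conjPEquiv e g) := by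
  simp only [conjPEquiv, PEquiv.trans_assoc]
  rw [← PEquiv.trans_assoc e.toPEquiv, ← Equiv.toPEquiv_trans, e.self_trans_symm,
    Equiv.toPEquiv_refl, PEquiv.refl_trans]

theorem conjPEquiv_injective (e : α ≃ β) : Function.Injective (conjPEquiv e) := by
  intro f g h
  ext1 x
  have := congr($h (e x))
  rwa [conjPEquiv_apply, conjPEquiv_apply, (Option.map_injective e.injective).eq_iff] at this

variable {n : ℕ} (e : α ≃ Fin n)

theorem isSubsemigroup_image_conjPEquiv {S : Set (α ≃. α)}
    (hS : ∀ f ∈ S, ∀ g ∈ S, f.trans g ∈ S) : IsSubsemigroup (conjPEquiv e '' S) := by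
  rintro _ ⟨f, hf, rfl⟩ _ ⟨g, hg, rfl⟩
  rw [← conjPEquiv_trans]
  exact ⟨_, hS f hf g hg, rfl⟩

theorem isSingular_conjPEquiv {f : α ≃. α} (hf : ∃ x, f x = none) :
    IsSingular (conjPEquiv e f) := by
  obtain ⟨x, hx⟩ := hf
  exact ⟨e x, by rw [conjPEquiv_apply, hx, Option.map_none]⟩

theorem semitransitive_image_conjPEquiv {S : Set (α ≃. α)}
    (hS : ∀ x y, ∃ φ ∈ S, φ x = some y ∨ φ y = some x) :
    Semitransitive (conjPEquiv e '' S) := by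
  intro x y
  obtain ⟨φ, hφ, h⟩ := hS (e.symm x) (e.symm y)
  refine ⟨_, ⟨φ, hφ, rfl⟩, ?_⟩
  rw [← e.apply_symm_apply x, ← e.apply_symm_apply y, conjPEquiv_apply, conjPEquiv_apply]
  rcases h with h | h
  · exact .inl (by rw [h, Option.map_some])
  · exact .inr (by rw [h, Option.map_some])

end Conj

section Blocks

variable {m p : ℕ}

noncomputable def fromBase (v : ZMod m × ZMod p) : (ZMod m × ZMod p) ≃. (ZMod m × ZMod p) :=
  translateOn {x | x.1.val = 0} v

noncomputable def shiftUp (v : ZMod m × ZMod p) : (ZMod m × ZMod p) ≃. (ZMod m × ZMod p) :=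
  translateOn {x | 0 < x.1.val ∧ x.1.val + v.1.val < m} v

theorem fromBase_apply_of_val_eq_zero {v x : ZMod m × ZMod p} (hx : x.1.val = 0) :
    fromBase v x = some (v + x) :=
  translateOn_apply_of_mem hx

theorem fromBase_apply_of_val_ne_zero {v x : ZMod m × ZMod p} (hx : x.1.val ≠ 0) :
    fromBase v x = none :=
  translateOn_apply_of_notMem hx

theorem shiftUp_apply_of_lt {v x : ZMod m × ZMod p} (hx : 0 < x.1.val)
    (hxv : x.1.val + v.1.val < m) :
    shiftUp v x = some (v + x) :=
  translateOn_apply_of_mem ⟨hx, hxv⟩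

theorem shiftUp_apply_of_val_eq_zero {v x : ZMod m × ZMod p} (hx : x.1.val = 0) :
    shiftUp v x = none :=
  translateOn_apply_of_notMem fun h => (Nat.ne_of_gt h.1) hx

theorem val_fst_add_of_lt {v x : ZMod m × ZMod p} (h : x.1.val + v.1.val < m) :
    (v + x).1.val = v.1.val + x.1.val := by
  rw [Prod.fst_add, ZMod.val_add_of_lt (by omega)]

theorem shiftUp_eq_bot {v : ZMod m × ZMod p} (hv : m ≤ v.1.val + 1) : shiftUp v = ⊥ :=
  translateOn_eq_bot fun _ hx => by simp only [Set.mem_ofPred_eq] at hx; omega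

theorem shiftUp_trans_shiftUp (v w : ZMod m × ZMod p) :
    (shiftUp v).trans (shiftUp w) = if v.1.val + w.1.val < m then shiftUp (w + v) else ⊥ := by
  rw [shiftUp, shiftUp, translateOn_trans]
  split_ifs with hvw
  · have hwv : (w + v).1.val = w.1.val + v.1.val := val_fst_add_of_lt hvw
    congr 1
    ext x
    simp only [Set.mem_ofPred_eq, hwv]
    by_cases hx : x.1.val + v.1.val < m
    · rw [val_fst_add_of_lt hx]; omega
    · omega
  · refine translateOn_eq_bot fun x ⟨⟨hx0, hx⟩, hvx⟩ => hvw ?_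
    simp only [Set.mem_ofPred_eq, val_fst_add_of_lt hx] at hvx
    omega

theorem shiftUp_trans_fromBase (v w : ZMod m × ZMod p) : (shiftUp v).trans (fromBase w) = ⊥ := by
  rw [shiftUp, fromBase, translateOn_trans]
  refine translateOn_eq_bot fun x ⟨⟨hx0, hx⟩, hvx⟩ => ?_
  simp only [Set.mem_ofPred_eq, val_fst_add_of_lt hx] at hvx
  omega

variable [NeZero m]

theorem fromBase_trans_fromBase (v w : ZMod m × ZMod p) :
    (fromBase v).trans (fromBase w) = if v.1.val = 0 then fromBase (w + v) else ⊥ := by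
  have hv := ZMod.val_lt v.1
  rw [fromBase, fromBase, translateOn_trans]
  split_ifs with hv0
  · congr 1
    ext x
    simp only [Set.mem_ofPred_eq]
    by_cases hx : x.1.val = 0
    · rw [val_fst_add_of_lt (by omega)]; omega
    · omega
  · refine translateOn_eq_bot fun x ⟨hx, hvx⟩ => hv0 ?_
    simp only [Set.mem_ofPred_eq] at hx hvx
    rw [val_fst_add_of_lt (by omega)] at hvx
    omega

theorem fromBase_trans_shiftUp (v w : ZMod m × ZMod p) :
    (fromBase v).trans (shiftUp w) =
      if 0 < v.1.val ∧ v.1.val + w.1.val < m then fromBase (w + v) else ⊥ := by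
  have hv := ZMod.val_lt v.1
  rw [fromBase, shiftUp, translateOn_trans]
  split_ifs with hvw
  · congr 1
    ext x
    simp only [Set.mem_ofPred_eq]
    by_cases hx : x.1.val = 0
    · rw [val_fst_add_of_lt (by omega)]; omega
    · omega
  · refine translateOn_eq_bot fun x ⟨hx, hvx⟩ => hvw ?_
    simp only [Set.mem_ofPred_eq] at hx hvx
    rw [val_fst_add_of_lt (by omega)] at hvx
    omega

end Blocks

section BlockSemigroup

variable {m p : ℕ}

noncomputable def blockSemigroup (m p : ℕ) : Set ((ZMod m × ZMod p) ≃. (ZMod m × ZMod p)) :=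
  insert ⊥ (Set.range fromBase ∪ shiftUp '' {v | v.1.val + 1 < m})

theorem bot_mem_blockSemigroup : ⊥ ∈ blockSemigroup m p :=
  Set.mem_insert _ _

theorem fromBase_mem_blockSemigroup (v : ZMod m × ZMod p) : fromBase v ∈ blockSemigroup m p :=
  .inr (.inl ⟨v, rfl⟩)

theorem shiftUp_mem_blockSemigroup (v : ZMod m × ZMod p) : shiftUp v ∈ blockSemigroup m p := by
  by_cases hv : v.1.val + 1 < m
  · exact .inr (.inr ⟨v, hv, rfl⟩)
  · rw [shiftUp_eq_bot (by omega)]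
    exact bot_mem_blockSemigroup

theorem exists_apply_eq_none_of_mem_blockSemigroup (hm : 1 < m)
    {φ : (ZMod m × ZMod p) ≃. (ZMod m × ZMod p)} (hφ : φ ∈ blockSemigroup m p) :
    ∃ x, φ x = none := by
  have h0 : (0 : ZMod m × ZMod p).1.val = 0 := ZMod.val_zero
  rcases hφ with rfl | ⟨v, rfl⟩ | ⟨v, -, rfl⟩
  · exact ⟨0, rfl⟩
  · exact ⟨(1, 0), fromBase_apply_of_val_ne_zero (by simp [ZMod.val_one'' hm.ne'])⟩
  · exact ⟨0, shiftUp_apply_of_val_eq_zero h0⟩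

variable [NeZero m]

theorem trans_mem_blockSemigroup {f g : (ZMod m × ZMod p) ≃. (ZMod m × ZMod p)}
    (hf : f ∈ blockSemigroup m p) (hg : g ∈ blockSemigroup m p) :
    f.trans g ∈ blockSemigroup m p := by
  rcases hf with rfl | ⟨v, rfl⟩ | ⟨v, -, rfl⟩
  · rw [PEquiv.bot_trans]
    exact bot_mem_blockSemigroup
  all_goals rcases hg with rfl | ⟨w, rfl⟩ | ⟨w, -, rfl⟩
  all_goals simp only [PEquiv.trans_bot, fromBase_trans_fromBase, fromBase_trans_shiftUp,
    shiftUp_trans_fromBase, shiftUp_trans_shiftUp]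
  all_goals try split_ifs
  all_goals first
    | exact bot_mem_blockSemigroup
    | exact fromBase_mem_blockSemigroup _
    | exact shiftUp_mem_blockSemigroup _

theorem exists_mem_blockSemigroup_apply_eq (x y : ZMod m × ZMod p) :
    ∃ φ ∈ blockSemigroup m p, φ x = some y ∨ φ y = some x := by
  wlog hxy : x.1.val ≤ y.1.val generalizing x y
  · obtain ⟨φ, hφ, h⟩ := this y x (by omega)
    exact ⟨φ, hφ, h.symm⟩
  by_cases hx : x.1.val = 0
  · refine ⟨fromBase (y - x), fromBase_mem_blockSemigroup _, .inl ?_⟩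
    rw [fromBase_apply_of_val_eq_zero hx, sub_add_cancel]
  · refine ⟨shiftUp (y - x), shiftUp_mem_blockSemigroup _, .inl ?_⟩
    have hyx : (y - x).1.val = y.1.val - x.1.val := by rw [Prod.fst_sub, ZMod.val_sub hxy]
    have hy := ZMod.val_lt y.1
    rw [shiftUp_apply_of_lt (by omega) (by omega), sub_add_cancel]

theorem ncard_val_add_one_lt : {a : ZMod m | a.val + 1 < m}.ncard = m - 1 := by
  rw [← Set.ncard_image_of_injective _ (ZMod.val_injective m), ← Set.ncard_Iio_nat (m - 1)]
  congr 1
  ext k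
  simp only [Set.mem_image, Set.mem_ofPred_eq, Set.mem_Iio]
  constructor
  · rintro ⟨a, ha, rfl⟩
    omega
  · intro hk
    exact ⟨k, by rw [ZMod.val_cast_of_lt (by omega)]; omega, ZMod.val_cast_of_lt (by omega)⟩

theorem ncard_blockSemigroup [NeZero p] (hm : 1 < m) :
    (blockSemigroup m p).ncard = 2 * (p * m) - p + 1 := by
  -- Members are told apart by their values at `0` and at `(1, 0)`.
  have h0 : (0 : ZMod m × ZMod p).1.val = 0 := ZMod.val_zero
  have hbase : ∀ v : ZMod m × ZMod p, fromBase v 0 = some v := fun v => by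
    rw [fromBase_apply_of_val_eq_zero h0, add_zero]
  have h1 : ((1, 0) : ZMod m × ZMod p).1.val = 1 := ZMod.val_one'' hm.ne'
  have hshiftUp :
      ∀ v : ZMod m × ZMod p, v.1.val + 1 < m → shiftUp v (1, 0) = some (v + (1, 0)) :=
    fun v hv => shiftUp_apply_of_lt (by omega) (by omega)
  have hinj : Function.Injective (fromBase : ZMod m × ZMod p → _) := fun v w h => by
    simpa [hbase] using congr($h 0)
  have hinjOn : Set.InjOn shiftUp {v : ZMod m × ZMod p | v.1.val + 1 < m} := fun v hv w hw h => by
    simpa [hshiftUp v hv, hshiftUp w hw] using congr($h (1, 0))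
  have hdisj :
      Disjoint (Set.range fromBase) (shiftUp '' {v : ZMod m × ZMod p | v.1.val + 1 < m}) := by
    rw [Set.disjoint_left]
    rintro _ ⟨v, rfl⟩ ⟨w, -, h⟩
    simpa [hbase, shiftUp_apply_of_val_eq_zero h0] using congr($h 0)
  have hbot :
      ⊥ ∉ Set.range fromBase ∪ shiftUp '' {v : ZMod m × ZMod p | v.1.val + 1 < m} := by
    rintro (⟨v, h⟩ | ⟨v, hv, h⟩)
    · simpa [hbase] using congr($h 0)
    · simpa [hshiftUp v hv] using congr($h (1, 0))
  have hprod : {v : ZMod m × ZMod p | v.1.val + 1 < m} = {a | a.val + 1 < m} ×ˢ Set.univ := by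
    ext; simp
  rw [blockSemigroup, Set.ncard_insert_of_notMem hbot, Set.ncard_union_eq hdisj,
    ← Set.image_univ, Set.ncard_image_of_injective _ hinj, hinjOn.ncard_image, hprod,
    Set.ncard_prod, ncard_val_add_one_lt, Set.ncard_univ, Set.ncard_univ, Nat.card_prod,
    Nat.card_zmod, Nat.card_zmod, Nat.sub_mul, one_mul, mul_comm p m]
  have := Nat.le_mul_of_pos_left p (by omega : 0 < m)
  omega

end BlockSemigroup

theorem stmt1_general (n p : ℕ) (hpd : p ∣ n) (hplt : p < n) :
    ∃ S : Set (ISemi n),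
      IsSubsemigroup S ∧ (∀ φ ∈ S, IsSingular φ) ∧ Semitransitive S ∧
        S.ncard = 2 * n - p + 1 := by
  obtain ⟨m, rfl⟩ := hpd
  have hp : 0 < p := Nat.pos_of_ne_zero fun h => by simp [h] at hplt
  have hm : 1 < m := (lt_mul_iff_one_lt_right hp).mp hplt
  have : NeZero p := ⟨hp.ne'⟩
  have : NeZero m := ⟨by omega⟩
  let e : ZMod m × ZMod p ≃ Fin (p * m) := Fintype.equivOfCardEq (by simp [ZMod.card, mul_comm])
  refine ⟨conjPEquiv e '' blockSemigroup m p,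
    isSubsemigroup_image_conjPEquiv e fun f hf g hg => trans_mem_blockSemigroup hf hg, ?_,
    semitransitive_image_conjPEquiv e exists_mem_blockSemigroup_apply_eq, ?_⟩
  · rintro _ ⟨φ, hφ, rfl⟩
    exact isSingular_conjPEquiv e (exists_apply_eq_none_of_mem_blockSemigroup hm hφ)
  · rw [Set.ncard_image_of_injective _ (conjPEquiv_injective e), ncard_blockSemigroup hm]

/-- for every proper divisor `p` of `n ≥ 2` there is a semitransitive
subsemigroup of the singular part `I_n \ S_n` of cardinality exactly `2n - p + 1`. -/
theorem stmt1 (n p : ℕ) (hn : 2 ≤ n) (hpd : p ∣ n) (hplt : p < n) :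
    ∃ S : Set (ISemi n),
      IsSubsemigroup S ∧ (∀ φ ∈ S, IsSingular φ) ∧ Semitransitive S ∧
        S.ncard = 2 * n - p + 1 :=
  stmt1_general n p hpd hplt
end

section
/- Let S be a semitransitive subsemigroup of the singular part I_n \ S_n with |S| ≤ 2n. Then S contains exactly two non-zero idempotents g and h; moreover the domains of g and h are disjoint and their union is the whole underlying n-element set X. -/
/-!
For `x ∈ X` let `minIdemDom S x` be the domain of the least idempotent of `S` fixing `x`: it
exists because the idempotents of `I_n` are the partial identities, so the product of two of them
fixing `x` is again one fixing `x`, with the intersection of their domains. These sets are not all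
of `X` (`S` is singular), and `p ∈ minIdemDom S x` implies `minIdemDom S p ⊆ minIdemDom S x`.

If an element `ν ∈ S` mapping `p` to `q` has domain in `minIdemDom S p` and range in
`minIdemDom S q` (an arrow, obtained by composing with the two idempotents), then `ν` determines
both sets. Call `x` and `y` equivalent when their sets agree. With three or more classes this
separates `2n + 1` elements of `S`: `⊥`, for each `x` an arrow into `x` from a top of its class
(for the preorder `STGe S`), and for each `x` an arrow between `x` and a top of a partner class,
the partner being chosen along a map of classes without fixed points or 2-cycles. So exactly two sets occur; they
partition `X`, and the domain of any non-zero idempotent of `S` is one of them, since otherwise it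
would be all of `X`.

`⊥ ∈ S`: otherwise let `m` be the non-zero idempotent of `S` with least domain `M`, and compose an
element of `S` joining a point of `M` to a point outside `M` with `m` on the side of `M`. Its
idempotent power has domain `M` and commutes with it, so it would have to preserve `M`.
-/

open Set

theorem exists_isIdempotentElem_mem_of_finite {M : Type*} [Semigroup M] {s : Set M}
    (hs : s.Finite) (hne : s.Nonempty) (hmul : ∀ x ∈ s, ∀ y ∈ s, x * y ∈ s) :
    ∃ e ∈ s, IsIdempotentElem e := by
  let : TopologicalSpace M := ⊥
  have : DiscreteTopology M := ⟨rfl⟩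
  exact exists_idempotent_in_compact_subsemigroup (fun _ => continuous_of_discreteTopology)
    s hne hs.isCompact hmul

theorem exists_isIdempotentElem_pow {M : Type*} [Monoid M] [Finite M] (x : M) :
    ∃ k ≠ 0, IsIdempotentElem (x ^ k) := by
  obtain ⟨_, ⟨k, hk, rfl⟩, he⟩ := exists_isIdempotentElem_mem_of_finite
    (s := {y | ∃ k ≠ 0, x ^ k = y}) (toFinite _) ⟨x, 1, one_ne_zero, pow_one x⟩ (by
      rintro _ ⟨i, hi, rfl⟩ _ ⟨j, -, rfl⟩
      exact ⟨i + j, by omega, pow_add x i j⟩)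
  exact ⟨k, hk, he⟩

namespace PEquiv

variable {α β : Type*}

instance [Finite α] [Finite β] : Finite (α ≃. β) :=
  Finite.of_injective (⇑) fun _ _ h => ext (congrFun h)

/-- `f * g` applies `f` first, as `PEquiv.trans` does and as in the right-action convention of
`ISemi`. -/
instance : Monoid (α ≃. α) where
  mul f g := f.trans g
  mul_assoc := trans_assoc
  one := PEquiv.refl α
  one_mul := refl_trans
  mul_one := trans_refl

theorem mul_apply (f g : α ≃. α) (a : α) : (f * g) a = (f a).bind g := rfl

theorem mul_eq_some_iff {f g : α ≃. α} {a c : α} :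
    (f * g) a = some c ↔ ∃ b, f a = some b ∧ g b = some c :=
  trans_eq_some f g a c

def dom (f : α ≃. β) : Set α := {a | (f a).isSome}

def ran (f : α ≃. β) : Set β := {b | ∃ a, f a = some b}

theorem mem_dom_of_apply_eq_some {f : α ≃. β} {a : α} {b : β} (h : f a = some b) :
    a ∈ f.dom := by
  simp [dom, h]

theorem mem_ran_of_apply_eq_some {f : α ≃. β} {a : α} {b : β} (h : f a = some b) :
    b ∈ f.ran :=
  ⟨a, h⟩

theorem ne_bot_iff_dom_nonempty {f : α ≃. β} : f ≠ ⊥ ↔ f.dom.Nonempty := by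
  refine ⟨fun hf => ?_, fun ⟨a, ha⟩ hf => by simp [hf, dom, bot_apply] at ha⟩
  by_contra hd
  exact hf (ext fun a => by
    simpa [dom, bot_apply] using fun h : (f a).isSome => hd ⟨a, h⟩)

theorem dom_mul_subset (f g : α ≃. α) : (f * g).dom ⊆ f.dom := by
  intro a ha
  obtain ⟨c, hc⟩ := Option.isSome_iff_exists.1 ha
  obtain ⟨b, hb, -⟩ := mul_eq_some_iff.1 hc
  exact mem_dom_of_apply_eq_some hb

theorem ran_mul_subset (f g : α ≃. α) : (f * g).ran ⊆ g.ran := by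
  rintro c ⟨a, hc⟩
  obtain ⟨b, -, hb⟩ := mul_eq_some_iff.1 hc
  exact ⟨b, hb⟩

theorem dom_pow_subset (f : α ≃. α) {k : ℕ} (hk : k ≠ 0) : (f ^ k).dom ⊆ f.dom := by
  obtain ⟨k, rfl⟩ := Nat.exists_eq_succ_of_ne_zero hk
  rw [pow_succ']
  exact dom_mul_subset _ _

theorem ran_pow_subset (f : α ≃. α) {k : ℕ} (hk : k ≠ 0) : (f ^ k).ran ⊆ f.ran := by
  obtain ⟨k, rfl⟩ := Nat.exists_eq_succ_of_ne_zero hk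
  rw [pow_succ]
  exact ran_mul_subset _ _

theorem isIdempotentElem_iff {e : α ≃. α} :
    IsIdempotentElem e ↔ ∀ a b, e a = some b → b = a := by
  constructor
  · intro he a b hab
    have hb : e b = some b := by simpa [mul_apply, hab] using congrArg (· a) he
    exact (e.inj hab hb).symm
  · intro he
    ext a b
    cases h : e a with
    | none => simp [mul_apply, h]
    | some c => obtain rfl := he a c h; simp [mul_apply, h]

end PEquiv

namespace IsIdempotentElem

open PEquiv

variable {α : Type*} {e : α ≃. α}

theorem eq_of_apply_eq_some (he : IsIdempotentElem e) {a b : α} (h : e a = some b) : b = a :=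
  PEquiv.isIdempotentElem_iff.1 he a b h

theorem apply_of_mem_dom (he : IsIdempotentElem e) {a : α} (ha : a ∈ e.dom) :
    e a = some a := by
  obtain ⟨b, hb⟩ := Option.isSome_iff_exists.1 ha
  rwa [he.eq_of_apply_eq_some hb] at hb

theorem ran_eq_dom (he : IsIdempotentElem e) : e.ran = e.dom := by
  ext a
  refine ⟨fun ⟨b, hb⟩ => ?_, fun ha => ⟨a, he.apply_of_mem_dom ha⟩⟩
  obtain rfl := he.eq_of_apply_eq_some hb
  exact mem_dom_of_apply_eq_some hb

theorem dom_mul (he : IsIdempotentElem e) (f : α ≃. α) : (e * f).dom = e.dom ∩ f.dom := by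
  ext a
  simp only [dom, mem_ofPred_eq, mem_inter_iff, mul_apply]
  cases h : e a with
  | none => simp
  | some b => obtain rfl := he.eq_of_apply_eq_some h; simp

theorem eq_of_dom_eq {f : α ≃. α} (he : IsIdempotentElem e) (hf : IsIdempotentElem f)
    (h : e.dom = f.dom) : e = f := by
  ext1 a
  by_cases ha : a ∈ e.dom
  · rw [he.apply_of_mem_dom ha, hf.apply_of_mem_dom (h ▸ ha)]
  · have ha' : a ∉ f.dom := h ▸ ha
    simp only [dom, mem_ofPred_eq, Option.not_isSome_iff_eq_none] at ha ha'
    rw [ha, ha']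

theorem mem_dom_iff_of_commute (he : IsIdempotentElem e) {ν : α ≃. α} (hc : Commute ν e)
    {a b : α} (hab : ν a = some b) : a ∈ e.dom ↔ b ∈ e.dom := by
  have hνe : e b = (e a).bind ν := by simpa [mul_apply, hab] using congrArg (· a) hc.eq
  constructor
  · intro ha
    rw [he.apply_of_mem_dom ha, Option.bind_some, hab] at hνe
    exact mem_dom_of_apply_eq_some hνe
  · intro hb
    rw [he.apply_of_mem_dom hb] at hνe
    cases h : e a with
    | none => simp [h] at hνe
    | some c => exact mem_dom_of_apply_eq_some h

end IsIdempotentElem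

namespace PEquiv

variable {α : Type*}

theorem isIdempotentElem_mul {e f : α ≃. α} (he : IsIdempotentElem e)
    (hf : IsIdempotentElem f) : IsIdempotentElem (e * f) := by
  refine isIdempotentElem_iff.2 fun a c hac => ?_
  obtain ⟨b, hab, hbc⟩ := mul_eq_some_iff.1 hac
  rw [hf.eq_of_apply_eq_some hbc, he.eq_of_apply_eq_some hab]

theorem exists_forall_dom_subset [Finite α] {T : Set (α ≃. α)}
    (hT : ∀ e ∈ T, IsIdempotentElem e) (hmul : ∀ e ∈ T, ∀ f ∈ T, e * f ∈ T)
    (hne : T.Nonempty) : ∃ e ∈ T, ∀ f ∈ T, e.dom ⊆ f.dom := by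
  obtain ⟨e, heT, hmin⟩ := T.toFinite.exists_minimalFor dom T hne
  refine ⟨e, heT, fun f hf => ?_⟩
  have hef : e.dom ⊆ (e * f).dom := hmin (hmul e heT f hf) (dom_mul_subset e f)
  rw [(hT e heT).dom_mul] at hef
  exact hef.trans inter_subset_right

theorem mem_iff_mem_of_subset_dom_pow {ν : α ≃. α} {k : ℕ} (hk : k ≠ 0)
    (hψ : IsIdempotentElem (ν ^ k)) {M : Set α} (hM : M ⊆ (ν ^ k).dom)
    (hν : ν.dom ⊆ M ∨ ν.ran ⊆ M) {a b : α} (hab : ν a = some b) : a ∈ M ↔ b ∈ M := by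
  have hψM : (ν ^ k).dom = M := by
    refine Subset.antisymm ?_ hM
    rcases hν with h | h
    · exact (dom_pow_subset ν hk).trans h
    · exact hψ.ran_eq_dom.symm.subset.trans ((ran_pow_subset ν hk).trans h)
  rw [← hψM]
  exact hψ.mem_dom_iff_of_commute (Commute.self_pow ν k) hab

end PEquiv

open PEquiv

variable {n : ℕ} {S : Set (ISemi n)}

theorem IsSubsemigroup.mul_mem (hsub : IsSubsemigroup S) {a b : ISemi n} (ha : a ∈ S)
    (hb : b ∈ S) : a * b ∈ S :=
  hsub a ha b hb

theorem IsSubsemigroup.pow_mem (hsub : IsSubsemigroup S) {ν : ISemi n} (hν : ν ∈ S) {k : ℕ}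
    (hk : k ≠ 0) : ν ^ k ∈ S := by
  induction k with
  | zero => exact absurd rfl hk
  | succ k ih =>
    rcases eq_or_ne k 0 with rfl | hk'
    · simpa using hν
    · rw [pow_succ]
      exact hsub.mul_mem (ih hk') hν

theorem STGe.trans (hsub : IsSubsemigroup S) {x y z : Fin n} (hxy : STGe S x y)
    (hyz : STGe S y z) : STGe S x z := by
  obtain ⟨φ, hφ, h₁⟩ := hxy
  obtain ⟨ψ, hψ, h₂⟩ := hyz
  exact ⟨φ * ψ, hsub.mul_mem hφ hψ, by simp [mul_apply, h₁, h₂]⟩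

theorem Semitransitive.stGe_or_stGe (hst : Semitransitive S) (x y : Fin n) :
    STGe S x y ∨ STGe S y x := by
  obtain ⟨φ, hφ, h | h⟩ := hst x y
  exacts [Or.inl ⟨φ, hφ, h⟩, Or.inr ⟨φ, hφ, h⟩]

theorem Semitransitive.stGe_refl (hst : Semitransitive S) (x : Fin n) : STGe S x x :=
  (hst.stGe_or_stGe x x).elim id id

def minIdemDom (S : Set (ISemi n)) (x : Fin n) : Set (Fin n) :=
  ⋂ e ∈ {e | e ∈ S ∧ IsIdempotentElem e ∧ e x = some x}, e.dom

theorem mem_minIdemDom_self (x : Fin n) : x ∈ minIdemDom S x :=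
  mem_iInter₂.2 fun _ he => mem_dom_of_apply_eq_some he.2.2

theorem minIdemDom_subset_dom {e : ISemi n} (he : e ∈ S) (hi : IsIdempotentElem e) {p : Fin n}
    (hp : p ∈ e.dom) : minIdemDom S p ⊆ e.dom :=
  biInter_subset_of_mem ⟨he, hi, hi.apply_of_mem_dom hp⟩

theorem exists_dom_eq_minIdemDom (hsub : IsSubsemigroup S) (hst : Semitransitive S) (x : Fin n) :
    ∃ e ∈ S, IsIdempotentElem e ∧ e.dom = minIdemDom S x := by
  set T := {e | e ∈ S ∧ IsIdempotentElem e ∧ e x = some x}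
  have hne : T.Nonempty := by
    obtain ⟨e, ⟨he, hex⟩, hi⟩ := exists_isIdempotentElem_mem_of_finite
      (s := {ν | ν ∈ S ∧ ν x = some x}) (toFinite _) (hst.stGe_refl x)
      fun a ha b hb => ⟨hsub.mul_mem ha.1 hb.1, by simp [mul_apply, ha.2, hb.2]⟩
    exact ⟨e, he, hi, hex⟩
  obtain ⟨e, heT, hmin⟩ := exists_forall_dom_subset (T := T) (fun e he => he.2.1)
    (fun e he f hf => ⟨hsub.mul_mem he.1 hf.1, isIdempotentElem_mul he.2.1 hf.2.1,
      by simp [mul_apply, he.2.2, hf.2.2]⟩) hne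
  exact ⟨e, heT.1, heT.2.1,
    (subset_iInter₂ hmin).antisymm
      (minIdemDom_subset_dom heT.1 heT.2.1 (mem_dom_of_apply_eq_some heT.2.2))⟩

theorem minIdemDom_subset_of_mem (hsub : IsSubsemigroup S) (hst : Semitransitive S)
    {p x : Fin n} (h : p ∈ minIdemDom S x) : minIdemDom S p ⊆ minIdemDom S x := by
  obtain ⟨e, he, hi, hdom⟩ := exists_dom_eq_minIdemDom hsub hst x
  rw [← hdom] at h ⊢
  exact minIdemDom_subset_dom he hi h

theorem minIdemDom_ne_univ (hsub : IsSubsemigroup S) (hsing : ∀ φ ∈ S, IsSingular φ)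
    (hst : Semitransitive S) (x : Fin n) : minIdemDom S x ≠ univ := by
  obtain ⟨e, he, -, hdom⟩ := exists_dom_eq_minIdemDom hsub hst x
  obtain ⟨z, hz⟩ := hsing e he
  intro h
  have hz' : z ∈ e.dom := hdom ▸ h ▸ mem_univ z
  simp [dom, hz] at hz'

theorem Semitransitive.bot_mem [Nonempty (Fin n)] (hsub : IsSubsemigroup S)
    (hsing : ∀ φ ∈ S, IsSingular φ) (hst : Semitransitive S) : ⊥ ∈ S := by
  by_contra hbot
  set T := {e | e ∈ S ∧ IsIdempotentElem e ∧ e ≠ ⊥}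
  have hmul : ∀ e ∈ T, ∀ f ∈ T, e * f ∈ T := by
    rintro e ⟨he, hei, -⟩ f ⟨hf, hfi, -⟩
    exact ⟨hsub.mul_mem he hf, isIdempotentElem_mul hei hfi,
      fun h => hbot (h ▸ hsub.mul_mem he hf)⟩
  have hne : T.Nonempty := by
    obtain ⟨x⟩ := ‹Nonempty (Fin n)›
    obtain ⟨e, he, hei, hdom⟩ := exists_dom_eq_minIdemDom hsub hst x
    exact ⟨e, he, hei, ne_bot_iff_dom_nonempty.2 ⟨x, hdom ▸ mem_minIdemDom_self x⟩⟩
  obtain ⟨m, ⟨hmS, hm, hm0⟩, hmin⟩ := exists_forall_dom_subset (fun e he => he.2.1) hmul hne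
  obtain ⟨l, hl⟩ := ne_bot_iff_dom_nonempty.1 hm0
  obtain ⟨o, ho⟩ := hsing m hmS
  have ho' : o ∉ m.dom := by simp [dom, ho]
  obtain ⟨ν, hνS, a, b, hab, hM, hνM⟩ : ∃ ν ∈ S, ∃ a b, ν a = some b ∧
      (a ∈ m.dom ↔ b ∉ m.dom) ∧ (ν.dom ⊆ m.dom ∨ ν.ran ⊆ m.dom) := by
    obtain ⟨φ, hφ, h | h⟩ := hst o l
    · exact ⟨φ * m, hsub.mul_mem hφ hmS, o, l, by simp [mul_apply, h, hm.apply_of_mem_dom hl],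
        by tauto, Or.inr ((ran_mul_subset φ m).trans hm.ran_eq_dom.subset)⟩
    · exact ⟨m * φ, hsub.mul_mem hmS hφ, l, o, by simp [mul_apply, h, hm.apply_of_mem_dom hl],
        by tauto, Or.inl (dom_mul_subset m φ)⟩
  obtain ⟨k, hk, hψ⟩ := exists_isIdempotentElem_pow ν
  have hψS : ν ^ k ∈ S := hsub.pow_mem hνS hk
  have := mem_iff_mem_of_subset_dom_pow hk hψ
    (hmin _ ⟨hψS, hψ, fun h => hbot (h ▸ hψS)⟩) hνM hab
  tauto

def IsArrow (S : Set (ISemi n)) (ν : ISemi n) (p q : Fin n) : Prop :=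
  ν ∈ S ∧ ν p = some q ∧ ν.dom ⊆ minIdemDom S p ∧ ν.ran ⊆ minIdemDom S q

theorem exists_isArrow (hsub : IsSubsemigroup S) (hst : Semitransitive S) {p q : Fin n}
    (h : STGe S p q) : ∃ ν, IsArrow S ν p q := by
  obtain ⟨φ, hφ, hpq⟩ := h
  obtain ⟨e, he, hei, hedom⟩ := exists_dom_eq_minIdemDom hsub hst p
  obtain ⟨f, hf, hfi, hfdom⟩ := exists_dom_eq_minIdemDom hsub hst q
  have hep : e p = some p := hei.apply_of_mem_dom (hedom ▸ mem_minIdemDom_self p)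
  have hfq : f q = some q := hfi.apply_of_mem_dom (hfdom ▸ mem_minIdemDom_self q)
  refine ⟨e * φ * f, hsub.mul_mem (hsub.mul_mem he hφ) hf, by simp [mul_apply, hep, hpq, hfq],
    ?_, ?_⟩
  · exact hedom ▸ (dom_mul_subset _ _).trans (dom_mul_subset _ _)
  · exact hfdom ▸ hfi.ran_eq_dom ▸ ran_mul_subset _ _

theorem IsArrow.ne_bot {ν : ISemi n} {p q : Fin n} (h : IsArrow S ν p q) : ν ≠ ⊥ :=
  ne_bot_iff_dom_nonempty.2 ⟨p, mem_dom_of_apply_eq_some h.2.1⟩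

theorem IsArrow.minIdemDom_eq (hsub : IsSubsemigroup S) (hst : Semitransitive S)
    {ν : ISemi n} {p q p' q' : Fin n} (h : IsArrow S ν p q) (h' : IsArrow S ν p' q') :
    minIdemDom S p = minIdemDom S p' ∧ minIdemDom S q = minIdemDom S q' := by
  have key : ∀ {p q p' q'}, IsArrow S ν p q → IsArrow S ν p' q' →
      minIdemDom S p ⊆ minIdemDom S p' ∧ minIdemDom S q ⊆ minIdemDom S q' :=
    fun h h' => ⟨minIdemDom_subset_of_mem hsub hst (h'.2.2.1 (mem_dom_of_apply_eq_some h.2.1)),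
      minIdemDom_subset_of_mem hsub hst (h'.2.2.2 (mem_ran_of_apply_eq_some h.2.1))⟩
  exact ⟨(key h h').1.antisymm (key h' h).1, (key h h').2.antisymm (key h' h).2⟩

theorem exists_top_of_minIdemDom_eq (hsub : IsSubsemigroup S) (hst : Semitransitive S)
    (x : Fin n) : ∃ a, minIdemDom S a = minIdemDom S x ∧
      ∀ y, minIdemDom S y = minIdemDom S x → STGe S a y := by
  obtain ⟨a, ha, hmax⟩ := (toFinite {y | minIdemDom S y = minIdemDom S x}).exists_maximalFor
    (fun a => {z | STGe S a z}) _ ⟨x, rfl⟩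
  refine ⟨a, ha, fun y hy => (hst.stGe_or_stGe a y).elim id fun hya => ?_⟩
  exact hmax hy (fun z haz => hya.trans hsub haz) (hst.stGe_refl y)

theorem exists_class_top (hsub : IsSubsemigroup S) (hst : Semitransitive S) :
    ∃ A : Fin n → Fin n, (∀ x y, minIdemDom S x = minIdemDom S y → A x = A y) ∧
      ∀ x, minIdemDom S (A x) = minIdemDom S x ∧ STGe S (A x) x := by
  have : ∀ C : range (minIdemDom S), ∃ a, minIdemDom S a = C ∧
      ∀ y, minIdemDom S y = C → STGe S a y := by
    rintro ⟨_, x, rfl⟩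
    exact exists_top_of_minIdemDom_eq hsub hst x
  choose top htop using this
  exact ⟨fun x => top ⟨_, x, rfl⟩, fun x y h => congrArg top (Subtype.ext h),
    fun x => ⟨(htop _).1, (htop _).2 x rfl⟩⟩

theorem exists_partner_map {ι κ : Type*} (c : ι → κ) {x₁ x₂ x₃ : ι} (h₁₂ : c x₁ ≠ c x₂)
    (h₁₃ : c x₁ ≠ c x₃) (h₂₃ : c x₂ ≠ c x₃) :
    ∃ τ : ι → ι, (∀ x y, c x = c y → τ x = τ y) ∧ (∀ x, c (τ x) ≠ c x) ∧
      ∀ x y, c (τ x) = c y → c (τ y) ≠ c x := by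
  classical
  exact ⟨fun x => if c x = c x₁ then x₂ else if c x = c x₂ then x₃ else x₁,
    fun x y h => by simp only [h], fun x => by grind, fun x y => by grind⟩

theorem injective_of_isArrow_partner (hsub : IsSubsemigroup S) (hst : Semitransitive S)
    {τ : Fin n → Fin n} {χ : Fin n → ISemi n}
    (hτ : ∀ x y, minIdemDom S x = minIdemDom S y → τ x = τ y)
    (hτ_cycle : ∀ x y, minIdemDom S (τ x) = minIdemDom S y → minIdemDom S (τ y) ≠ minIdemDom S x)
    (hχ : ∀ x, IsArrow S (χ x) x (τ x) ∨ IsArrow S (χ x) (τ x) x) :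
    Function.Injective χ := by
  have hD := @IsArrow.minIdemDom_eq n S hsub hst
  intro x y hxy
  rcases hχ x with hx | hx <;> rcases hχ y with hy | hy <;> rw [← hxy] at hy
  · have h₁ := hy.2.1
    rw [← hτ x y (hD hx hy).1] at h₁
    exact (χ x).inj hx.2.1 h₁
  · exact absurd (hD hx hy).1.symm (hτ_cycle x y (hD hx hy).2)
  · exact absurd (hD hx hy).2.symm (hτ_cycle x y (hD hx hy).1)
  · have h₁ := hy.2.1
    rw [← hτ x y (hD hx hy).2] at h₁
    exact Option.some_injective _ (hx.2.1.symm.trans h₁)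

theorem two_mul_lt_ncard_of_arrows (hsub : IsSubsemigroup S) (hst : Semitransitive S)
    (hbot : ⊥ ∈ S) {A τ : Fin n → Fin n} {w χ : Fin n → ISemi n}
    (hA : ∀ x y, minIdemDom S x = minIdemDom S y → A x = A y)
    (hAdom : ∀ x, minIdemDom S (A x) = minIdemDom S x)
    (hτ : ∀ x y, minIdemDom S x = minIdemDom S y → τ x = τ y)
    (hτ_ne : ∀ x, minIdemDom S (τ x) ≠ minIdemDom S x)
    (hτ_cycle : ∀ x y, minIdemDom S (τ x) = minIdemDom S y → minIdemDom S (τ y) ≠ minIdemDom S x)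
    (hw : ∀ x, IsArrow S (w x) (A x) x)
    (hχ : ∀ x, IsArrow S (χ x) x (τ x) ∨ IsArrow S (χ x) (τ x) x) :
    2 * n < S.ncard := by
  have hD := @IsArrow.minIdemDom_eq n S hsub hst
  have hw_inj : Function.Injective w := by
    intro x y hxy
    have h₁ := (hw x).2.1
    rw [hxy, hA x y (hD (hw x) (hxy ▸ hw y)).2] at h₁
    exact Option.some_injective _ (h₁.symm.trans (hw y).2.1)
  have hwχ : ∀ x y, w x ≠ χ y := by
    intro x y hxy
    rcases hχ y with hy | hy <;> rw [← hxy] at hy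
    · exact hτ_ne y (((hD (hw x) hy).2.symm.trans (hAdom x).symm).trans (hD (hw x) hy).1)
    · exact hτ_ne y (((hD (hw x) hy).1.symm.trans (hAdom x)).trans (hD (hw x) hy).2)
  have hinj := hw_inj.sumElim (injective_of_isArrow_partner hsub hst hτ hτ_cycle hχ) hwχ
  have hbot' : ⊥ ∉ range (Sum.elim w χ) := by
    rintro ⟨x | x, hx⟩
    · exact (hw x).ne_bot hx
    · exact (hχ x).elim (·.ne_bot hx) (·.ne_bot hx)
  have hrange : range (Sum.elim w χ) ⊆ S := by
    rintro _ ⟨x | x, rfl⟩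
    · exact (hw x).1
    · exact (hχ x).elim (·.1) (·.1)
  calc 2 * n < (insert ⊥ (range (Sum.elim w χ))).ncard := by
        rw [ncard_insert_of_notMem hbot', ncard_range_of_injective hinj]
        simp [two_mul]
    _ ≤ S.ncard := ncard_le_ncard (insert_subset hbot hrange) (toFinite S)

theorem two_mul_lt_ncard_of_three_classes (hsub : IsSubsemigroup S)
    (hsing : ∀ φ ∈ S, IsSingular φ) (hst : Semitransitive S) {x₁ x₂ x₃ : Fin n}
    (h₁₂ : minIdemDom S x₁ ≠ minIdemDom S x₂) (h₁₃ : minIdemDom S x₁ ≠ minIdemDom S x₃)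
    (h₂₃ : minIdemDom S x₂ ≠ minIdemDom S x₃) : 2 * n < S.ncard := by
  have : Nonempty (Fin n) := ⟨x₁⟩
  obtain ⟨A, hA, hAx⟩ := exists_class_top hsub hst
  obtain ⟨τ, hτ, hτ_ne, hτ_cycle⟩ := exists_partner_map (minIdemDom S) h₁₂ h₁₃ h₂₃
  choose w hw using fun x => exists_isArrow hsub hst (hAx x).2
  choose χ hχ using fun x => exists_or.2 ((hst.stGe_or_stGe x (τ x)).imp
    (exists_isArrow hsub hst) (exists_isArrow hsub hst))
  exact two_mul_lt_ncard_of_arrows hsub hst (hst.bot_mem hsub hsing) hA (fun x => (hAx x).1)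
    hτ hτ_ne hτ_cycle hw hχ

theorem exists_two_classes [Nonempty (Fin n)] (hsub : IsSubsemigroup S)
    (hsing : ∀ φ ∈ S, IsSingular φ) (hst : Semitransitive S) (hcard : S.ncard ≤ 2 * n) :
    ∃ x₁ x₂, minIdemDom S x₁ ≠ minIdemDom S x₂ ∧
      ∀ y, minIdemDom S y = minIdemDom S x₁ ∨ minIdemDom S y = minIdemDom S x₂ := by
  obtain ⟨x₀⟩ := ‹Nonempty (Fin n)›
  obtain ⟨x₁, hx₁⟩ : ∃ x₁, minIdemDom S x₀ ≠ minIdemDom S x₁ := by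
    by_contra! h
    exact minIdemDom_ne_univ hsub hsing hst x₀
      (eq_univ_of_forall fun y => h y ▸ mem_minIdemDom_self y)
  refine ⟨x₀, x₁, hx₁, fun y => ?_⟩
  by_contra! hy
  exact hcard.not_gt (two_mul_lt_ncard_of_three_classes hsub hsing hst hx₁ hy.1.symm hy.2.symm)

theorem minIdemDom_union_eq_univ {x₁ x₂ : Fin n}
    (hcover : ∀ y, minIdemDom S y = minIdemDom S x₁ ∨ minIdemDom S y = minIdemDom S x₂) :
    minIdemDom S x₁ ∪ minIdemDom S x₂ = univ := by
  refine eq_univ_of_forall fun y => ?_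
  rcases hcover y with h | h
  · exact Or.inl (h ▸ mem_minIdemDom_self y)
  · exact Or.inr (h ▸ mem_minIdemDom_self y)

theorem disjoint_minIdemDom (hsub : IsSubsemigroup S) (hsing : ∀ φ ∈ S, IsSingular φ)
    (hst : Semitransitive S) {x₁ x₂ : Fin n}
    (hcover : ∀ y, minIdemDom S y = minIdemDom S x₁ ∨ minIdemDom S y = minIdemDom S x₂) :
    Disjoint (minIdemDom S x₁) (minIdemDom S x₂) := by
  refine disjoint_left.2 fun y h₁ h₂ => ?_
  have hU := minIdemDom_union_eq_univ hcover
  rcases hcover y with hy | hy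
  · apply minIdemDom_ne_univ hsub hsing hst x₂
    rw [← hU, union_eq_right.2 (hy ▸ minIdemDom_subset_of_mem hsub hst h₂)]
  · apply minIdemDom_ne_univ hsub hsing hst x₁
    rw [← hU, union_eq_left.2 (hy ▸ minIdemDom_subset_of_mem hsub hst h₁)]

theorem dom_eq_minIdemDom_or_eq (hsing : ∀ φ ∈ S, IsSingular φ) {x₁ x₂ : Fin n}
    (hcover : ∀ y, minIdemDom S y = minIdemDom S x₁ ∨ minIdemDom S y = minIdemDom S x₂)
    {e : ISemi n} (he : e ∈ S) (hi : IsIdempotentElem e) (he₀ : e ≠ ⊥) :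
    e.dom = minIdemDom S x₁ ∨ e.dom = minIdemDom S x₂ := by
  obtain ⟨p, hp⟩ := ne_bot_iff_dom_nonempty.1 he₀
  have hsame : ∀ q ∈ e.dom, minIdemDom S q = minIdemDom S p := by
    intro q hq
    by_contra hne
    have hU : minIdemDom S p ∪ minIdemDom S q = univ := by
      rcases hcover p with h | h <;> rcases hcover q with h' | h'
      · exact absurd (h'.trans h.symm) hne
      · rw [h, h', minIdemDom_union_eq_univ hcover]
      · rw [h, h', union_comm, minIdemDom_union_eq_univ hcover]
      · exact absurd (h'.trans h.symm) hne
    obtain ⟨z, hz⟩ := hsing e he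
    have hz' : z ∈ e.dom := union_subset (minIdemDom_subset_dom he hi hp)
      (minIdemDom_subset_dom he hi hq) (hU ▸ mem_univ z)
    simp [dom, hz] at hz'
  have hdom : e.dom = minIdemDom S p := Subset.antisymm
    (fun q hq => hsame q hq ▸ mem_minIdemDom_self q) (minIdemDom_subset_dom he hi hp)
  exact hdom ▸ hcover p

/-- a semitransitive subsemigroup `S` of the singular part with
`|S| ≤ 2n` contains exactly two non-zero idempotents `g, h`; their domains are
disjoint and cover the whole underlying set. -/
theorem stmt3 (n : ℕ) (hn : 1 ≤ n) (S : Set (ISemi n))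
    (hsub : IsSubsemigroup S)
    (hsing : ∀ φ ∈ S, IsSingular φ)
    (hst : Semitransitive S)
    (hcard : S.ncard ≤ 2 * n) :
    ∃ g h : ISemi n, g ∈ S ∧ h ∈ S ∧ g ≠ h ∧
      g.trans g = g ∧ h.trans h = h ∧ g ≠ ⊥ ∧ h ≠ ⊥ ∧
      (∀ e ∈ S, e.trans e = e → e ≠ ⊥ → e = g ∨ e = h) ∧
      (∀ x : Fin n, ¬((g x).isSome ∧ (h x).isSome)) ∧
      (∀ x : Fin n, (g x).isSome ∨ (h x).isSome) := by
  have : Nonempty (Fin n) := ⟨⟨0, hn⟩⟩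
  obtain ⟨x₁, x₂, h₁₂, hcover⟩ := exists_two_classes hsub hsing hst hcard
  obtain ⟨g, hgS, hg, hgdom⟩ := exists_dom_eq_minIdemDom hsub hst x₁
  obtain ⟨h, hhS, hh, hhdom⟩ := exists_dom_eq_minIdemDom hsub hst x₂
  have hdisj := disjoint_minIdemDom hsub hsing hst hcover
  have hunion := minIdemDom_union_eq_univ hcover
  rw [← hgdom, ← hhdom] at hdisj hunion
  refine ⟨g, h, hgS, hhS, fun hgh => h₁₂ (hgdom ▸ hhdom ▸ hgh ▸ rfl), hg, hh,
    ne_bot_iff_dom_nonempty.2 ⟨x₁, hgdom ▸ mem_minIdemDom_self x₁⟩,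
    ne_bot_iff_dom_nonempty.2 ⟨x₂, hhdom ▸ mem_minIdemDom_self x₂⟩,
    fun e he hi he₀ => ?_, fun x hx => disjoint_left.1 hdisj hx.1 hx.2,
    fun x => eq_univ_iff_forall.1 hunion x⟩
  replace hi : IsIdempotentElem e := hi
  rcases dom_eq_minIdemDom_or_eq hsing hcover he hi he₀ with hdom | hdom
  · exact Or.inl (hi.eq_of_dom_eq hg (hdom.trans hgdom.symm))
  · exact Or.inr (hi.eq_of_dom_eq hh (hdom.trans hhdom.symm))
end

section
/- Let m ≥ 2 and let A and B be nonempty disjoint sets with A ∪ B = {1, 2, …, m}. Then the set of integer differences {j − i : i ∈ A, j ∈ B} has at least m − 1 elements. -/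
/-! Since `A ∪ B = [1, m]` is a disjoint union, `#B + #A = m`, and the Cauchy–Davenport bound
`#s + #t - 1 ≤ #(s + t)` in the linearly ordered group `ℤ`, applied to `B` and `-A`, gives
`#(B - A) ≥ m - 1`. -/

open Finset Pointwise

theorem Finset.card_add_card_sub_one_le_card_sub {α : Type*} [AddGroup α] [LinearOrder α]
    [AddLeftMono α] [AddRightMono α] {s t : Finset α} (hs : s.Nonempty) (ht : t.Nonempty) :
    #s + #t - 1 ≤ #(s - t) := by
  simpa only [sub_eq_add_neg, card_neg] using
    cauchy_davenport_add_of_linearOrder_isCancelAdd hs ht.neg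

theorem stmt10_general (m : ℕ) (A B : Finset ℤ)
    (hA : A.Nonempty) (hB : B.Nonempty) (hdis : Disjoint A B)
    (hun : A ∪ B = Finset.Icc (1 : ℤ) (m : ℤ)) :
    m - 1 ≤ ((B ×ˢ A).image fun p => p.1 - p.2).card := by
  have hcard : #A + #B = m := by
    simpa [hun] using (card_union_of_disjoint hdis).symm
  rw [image_sub_product]
  have := card_add_card_sub_one_le_card_sub hB hA
  omega

/-- if `A` and `B` are nonempty disjoint sets with
`A ∪ B = {1, 2, …, m}` (`m ≥ 2`), then the set of differences
`{j - i : i ∈ A, j ∈ B}` has at least `m - 1` elements. -/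
theorem stmt10 (m : ℕ) (hm : 2 ≤ m) (A B : Finset ℤ)
    (hA : A.Nonempty) (hB : B.Nonempty) (hdis : Disjoint A B)
    (hun : A ∪ B = Finset.Icc (1 : ℤ) (m : ℤ)) :
    m - 1 ≤ ((B ×ˢ A).image fun p => p.1 - p.2).card :=
  stmt10_general m A B hA hB hdis hun
end

section
/- Let S be a semitransitive subsemigroup of the symmetric inverse semigroup I_n (n ≥ 1). Then for every x in the underlying set X there exists an idempotent e ∈ S with x in the domain of e (equivalently, e(x) = x). -/
/-! Semitransitivity applied to the pair `(x, x)` gives some `φ ∈ S` fixing `x`. Hence the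
elements of `S` fixing `x` form a finite nonempty subsemigroup, and every finite nonempty
semigroup contains an idempotent. -/

theorem Set.Finite.exists_mul_self_eq_of_mul_mem {M : Type*} [Semigroup M] {s : Set M}
    (hs : s.Finite) (hne : s.Nonempty) (hmul : ∀ a ∈ s, ∀ b ∈ s, a * b ∈ s) :
    ∃ e ∈ s, e * e = e :=
  letI : TopologicalSpace M := ⊥
  haveI : DiscreteTopology M := ⟨rfl⟩
  exists_idempotent_in_compact_subsemigroup (fun _ ↦ continuous_of_discreteTopology) s hne
    hs.isCompact hmul

@[reducible]
def PEquiv.transSemigroup (α : Type*) : Semigroup (α ≃. α) where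
  mul f g := f.trans g
  mul_assoc := PEquiv.trans_assoc

theorem PEquiv.exists_trans_self_eq_of_trans_mem {α : Type*} [Finite α] {s : Set (α ≃. α)}
    (hne : s.Nonempty) (htrans : ∀ f ∈ s, ∀ g ∈ s, f.trans g ∈ s) :
    ∃ e ∈ s, e.trans e = e :=
  letI := PEquiv.transSemigroup α
  haveI : Finite (α ≃. α) := .of_injective _ DFunLike.coe_injective
  (Set.toFinite s).exists_mul_self_eq_of_mul_mem hne htrans

theorem PEquiv.trans_apply_eq_self {α : Type*} {f g : α ≃. α} {x : α}
    (hf : f x = some x) (hg : g x = some x) : f.trans g x = some x :=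
  (PEquiv.trans_eq_some f g x x).2 ⟨x, hf, hg⟩

theorem stmt11_general (n : ℕ) (S : Set (ISemi n))
    (hsub : IsSubsemigroup S)
    (hst : Semitransitive S) :
    ∀ x : Fin n, ∃ e ∈ S, e.trans e = e ∧ e x = some x := by
  intro x
  have hne : {e ∈ S | e x = some x}.Nonempty := by
    obtain ⟨φ, hφ, hx | hx⟩ := hst x x <;> exact ⟨φ, hφ, hx⟩
  obtain ⟨e, ⟨heS, hex⟩, hidem⟩ := PEquiv.exists_trans_self_eq_of_trans_mem hne
    fun f ⟨hfS, hfx⟩ g ⟨hgS, hgx⟩ ↦ ⟨hsub f hfS g hgS, PEquiv.trans_apply_eq_self hfx hgx⟩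
  exact ⟨e, heS, hidem, hex⟩

/-- in a semitransitive subsemigroup of `I_n`, every point of the
underlying set lies in the domain of some idempotent of `S`. -/
theorem stmt11 (n : ℕ) (hn : 1 ≤ n) (S : Set (ISemi n))
    (hsub : IsSubsemigroup S)
    (hst : Semitransitive S) :
    ∀ x : Fin n, ∃ e ∈ S, e.trans e = e ∧ e x = some x :=
  stmt11_general n S hsub hst
end
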